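/- If u_1, ..., u_n (n ≥ 2) are elements of a free group such that the product u_1 ⋯ u_n equals the identity, then there exists k < n such that the reduced word length |u_k u_{k+1}| ≤ max(|u_k|, |u_{k+1}|). -/

import Mathlib

namespace PentusAux

open FreeGroup

variable {α : Type*} [DecidableEq α]

/-- The no-cancellation relation between adjacent letters. -/
def Rel (x y : α × Bool) : Prop := ¬(x.1 = y.1 ∧ y.2 = !x.2)

lemma not_reduced_of_pattern (a d : List (α × Bool)) (x : α) (b : Bool) :
    reduce (a ++ (x, b) :: (x, !b) :: d) ≠ a ++ (x, b) :: (x, !b) :: d := by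
  intro hEq
  have hstep : FreeGroup.Red.Step (a ++ (x, b) :: (x, !b) :: d) (a ++ d) := FreeGroup.Red.Step.not
  have h1 : reduce (a ++ (x, b) :: (x, !b) :: d) = reduce (a ++ d) :=
    FreeGroup.reduce.Step.eq hstep
  have h2 : (reduce (a ++ d)).length ≤ (a ++ d).length :=
    (FreeGroup.Red.sublist (FreeGroup.reduce.red)).length_le
  have h3 := congrArg List.length hEq
  rw [h1] at h3
  simp only [List.length_append, List.length_cons] at h3 h2
  omega

lemma exists_pattern_of_not_reduced (L : List (α × Bool)) (h : reduce L ≠ L) :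
    ∃ a x b d, L = a ++ (x, b) :: (x, !b) :: d := by
  have hred : FreeGroup.Red L (reduce L) := FreeGroup.reduce.red
  rcases Relation.ReflTransGen.cases_head hred with heq | ⟨L', hstep, _⟩
  · exact absurd heq.symm h
  · cases hstep with
    | @not L₁ L₂ x b => exact ⟨L₁, x, b, L₂, rfl⟩

lemma exists_pattern_of_not_chain' (L : List (α × Bool)) (h : ¬ List.Chain' Rel L) :
    ∃ a x b d, L = a ++ (x, b) :: (x, !b) :: d := by
  induction L with
  | nil => exact absurd List.isChain_nil h
  | cons y t ih =>
    by_cases ht : List.Chain' Rel t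
    · simp only [List.Chain'] at h; rw [List.isChain_cons] at h
      have h' : ¬ ∀ z ∈ t.head?, Rel y z := fun hall => h ⟨hall, ht⟩
      push_neg at h'
      obtain ⟨z, hz, hrel⟩ := h'
      cases t with
      | nil => simp at hz
      | cons z' t' =>
        simp only [List.head?_cons, Option.mem_some_iff] at hz
        subst hz
        rw [Rel, not_not] at hrel
        have hz' : z' = (y.1, !y.2) := Prod.ext hrel.1.symm hrel.2
        exact ⟨[], y.1, y.2, t', by simp [hz']⟩
    · obtain ⟨a, x, b, d, rfl⟩ := ih ht
      exact ⟨y :: a, x, b, d, rfl⟩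

lemma not_chain'_of_pattern (a d : List (α × Bool)) (x : α) (b : Bool) :
    ¬ List.Chain' Rel (a ++ (x, b) :: (x, !b) :: d) := by
  intro h
  have h2 := (List.isChain_append.mp h).2.1
  rw [List.isChain_cons_cons] at h2
  exact h2.1 ⟨rfl, rfl⟩

lemma reduced_iff_chain' (L : List (α × Bool)) : reduce L = L ↔ List.Chain' Rel L := by
  constructor
  · intro h
    by_contra hc
    obtain ⟨a, x, b, d, rfl⟩ := exists_pattern_of_not_chain' L hc
    exact not_reduced_of_pattern a d x b h
  · intro h
    by_contra hr
    obtain ⟨a, x, b, d, rfl⟩ := exists_pattern_of_not_reduced L hr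
    exact not_chain'_of_pattern a d x b h

lemma reduced_append_left {p q : List (α × Bool)} (h : reduce (p ++ q) = p ++ q) :
    reduce p = p := by
  rw [reduced_iff_chain'] at h ⊢
  exact (List.isChain_append.mp h).1

lemma reduced_append_right {p q : List (α × Bool)} (h : reduce (p ++ q) = p ++ q) :
    reduce q = q := by
  rw [reduced_iff_chain'] at h ⊢
  exact (List.isChain_append.mp h).2.1

lemma reduced_glue {t s b : List (α × Bool)} (hs : s ≠ [])
    (h1 : reduce (t ++ s) = t ++ s) (h2 : reduce (s ++ b) = s ++ b) :
    reduce (t ++ s ++ b) = t ++ s ++ b := by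
  rw [reduced_iff_chain'] at h1 h2 ⊢
  rw [List.append_assoc]; simp only [List.Chain']; rw [List.isChain_append]
  obtain ⟨ht, hsc, hjun⟩ := List.isChain_append.mp h1
  refine ⟨ht, h2, ?_⟩
  intro x hx y hy
  apply hjun x hx
  rwa [List.head?_append_of_ne_nil _ hs] at hy

lemma invRev_cons (y : α × Bool) (c : List (α × Bool)) :
    invRev (y :: c) = invRev c ++ [(y.1, !y.2)] := by
  simp [FreeGroup.invRev]

lemma cancel_decomp (N : ℕ) : ∀ (L1 L2 : List (α × Bool)), L1.length ≤ N →
    reduce L1 = L1 → reduce L2 = L2 →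
    ∃ a c b, L1 = a ++ invRev c ∧ L2 = c ++ b ∧ reduce (L1 ++ L2) = a ++ b := by
  induction N with
  | zero =>
    intro L1 L2 hlen h1 h2
    have : L1 = [] := List.length_eq_zero_iff.mp (Nat.le_zero.mp hlen)
    subst this
    exact ⟨[], [], L2, by simp [FreeGroup.invRev], by simp, by simpa⟩
  | succ N ih =>
    intro L1 L2 hlen h1 h2
    by_cases hr : reduce (L1 ++ L2) = L1 ++ L2
    · exact ⟨L1, [], L2, by simp [FreeGroup.invRev], by simp, hr⟩
    · obtain ⟨p, x, b, d, hpat⟩ := exists_pattern_of_not_reduced _ hr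
      rcases List.append_eq_append_iff.mp hpat with ⟨a', _, ha2⟩ | ⟨c', hc1, hc2⟩
      · exact absurd (ha2 ▸ h2) (not_reduced_of_pattern a' d x b)
      · rcases c' with _ | ⟨y, c''⟩
        · simp only [List.nil_append] at hc2
          exact absurd (hc2 ▸ h2) (by simpa using not_reduced_of_pattern [] d x b)
        · rcases c'' with _ | ⟨z, c₃⟩
          · -- the good case : L1 = p ++ [(x,b)], L2 = (x,!b)::d
            simp only [List.cons_append, List.nil_append, List.cons.injEq] at hc2
            obtain ⟨rfl, hL2⟩ := hc2
            have hpred : reduce p = p := reduced_append_left (hc1 ▸ h1)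
            have hdred : reduce d = d := by
              have h2' : reduce ((x, !b) :: d) = (x, !b) :: d := by rw [hL2]; exact h2
              refine reduced_append_right (p := [(x, !b)]) ?_
              rw [List.singleton_append]
              exact h2'
            have hplen : p.length ≤ N := by
              have := congrArg List.length hc1
              simp only [List.length_append, List.length_cons, List.length_nil] at this
              omega
            obtain ⟨a, c, b', hA, hB, hC⟩ := ih p d hplen hpred hdred
            refine ⟨a, (x, !b) :: c, b', ?_, ?_, ?_⟩
            · rw [hc1, hA, invRev_cons, List.append_assoc]
              simp
            · rw [← hL2, hB]; rfl
            · have hstep : FreeGroup.Red.Step (L1 ++ L2) (p ++ d) := by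
                rw [hc1, ← hL2]
                have : (p ++ [(x, b)]) ++ (x, !b) :: d = p ++ (x, b) :: (x, !b) :: d := by simp
                rw [this]
                exact FreeGroup.Red.Step.not
              rw [FreeGroup.reduce.Step.eq hstep, hC]
          · -- pattern inside L1
            simp only [List.cons_append, List.cons.injEq] at hc2
            obtain ⟨rfl, rfl, _⟩ := hc2
            exact absurd (hc1 ▸ h1) (not_reduced_of_pattern p c₃ x b)

lemma reduce_invRev_append (c : List (α × Bool)) : reduce (invRev c ++ c) = [] := by
  have h1 : FreeGroup.mk (invRev c ++ c) = 1 := by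
    rw [← FreeGroup.mul_mk, ← FreeGroup.inv_mk, inv_mul_cancel]
  have h2 := congrArg FreeGroup.toWord h1
  rwa [FreeGroup.toWord_mk, FreeGroup.toWord_one] at h2

lemma step_lemma {w L M a c b t s : List (α × Bool)}
    (hw : reduce w = w)
    (hLd : L = a ++ invRev c) (hMd : M = c ++ b) (hRedLM : reduce (L ++ M) = a ++ b)
    (hws : w = t ++ s) (hLs : ∃ t', L = t' ++ s) (hcs : c.length < s.length) :
    ∃ t2, reduce (w ++ M) = t2 ++ b ∧ t2 ≠ [] := by
  obtain ⟨t', hL'⟩ := hLs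
  have hsplit : ∃ s', s = s' ++ invRev c ∧ a = t' ++ s' := by
    rcases List.append_eq_append_iff.mp (hL'.symm.trans hLd) with ⟨a', h1, h2⟩ | ⟨c2, h1, h2⟩
    · exact ⟨a', h2, h1⟩
    · have := congrArg List.length h2
      simp only [List.length_append, FreeGroup.invRev_length] at this
      omega
  obtain ⟨s', hs1, hs2⟩ := hsplit
  have hs'ne : s' ≠ [] := by
    intro hne
    rw [hne, List.nil_append] at hs1
    have := congrArg List.length hs1
    rw [FreeGroup.invRev_length] at this
    omega
  -- reducedness facts
  have hts' : reduce (t ++ s') = t ++ s' := by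
    apply reduced_append_left (q := invRev c)
    rw [List.append_assoc, ← hs1, ← hws]
    exact hw
  have hab : reduce (a ++ b) = a ++ b := by rw [← hRedLM]; exact FreeGroup.reduce.idem
  have hs'b : reduce (s' ++ b) = s' ++ b := by
    apply reduced_append_right (p := t')
    rw [← List.append_assoc, ← hs2]
    exact hab
  have hF : reduce (t ++ s' ++ b) = t ++ s' ++ b := reduced_glue hs'ne hts' hs'b
  have hmid : FreeGroup.Red (invRev c ++ c) [] := by
    have := FreeGroup.reduce.red (L := invRev c ++ c)
    rwa [reduce_invRev_append] at this
  have hwM : w ++ M = (t ++ s') ++ ((invRev c ++ c) ++ b) := by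
    rw [hws, hs1, hMd]; simp
  have hred : FreeGroup.Red (w ++ M) ((t ++ s') ++ ([] ++ b)) := by
    rw [hwM]
    exact FreeGroup.Red.append_append FreeGroup.Red.refl
      (FreeGroup.Red.append_append hmid FreeGroup.Red.refl)
  refine ⟨t ++ s', ?_, by simp [hs'ne]⟩
  have := FreeGroup.reduce.eq_of_red hred
  rw [this, List.nil_append]
  exact hF

end PentusAux

/-- Pentus's lemma: if `u 0, …, u (n-1)` (`n ≥ 2`) are elements of a free group whose
product is the identity, then for some adjacent pair the reduced word length of the
product does not exceed the maximum of their reduced word lengths. -/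
theorem pentus_free_group_lemma {α : Type*} [DecidableEq α] (n : ℕ) (hn : 2 ≤ n)
    (u : ℕ → FreeGroup α) (h : ((List.range n).map u).prod = 1) :
    ∃ k : ℕ, k + 1 < n ∧
      (u k * u (k + 1)).norm ≤ max (u k).norm (u (k + 1)).norm := by
  by_contra hcon
  push_neg at hcon
  set L : ℕ → List (α × Bool) := fun k => (u k).toWord with hLdef
  have hLred : ∀ k, FreeGroup.reduce (L k) = L k := fun k => FreeGroup.reduce_toWord _
  have D : ∀ k, ∃ a c b, L k = a ++ FreeGroup.invRev c ∧ L (k + 1) = c ++ b ∧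
      FreeGroup.reduce (L k ++ L (k + 1)) = a ++ b :=
    fun k => PentusAux.cancel_decomp (L k).length (L k) (L (k + 1)) le_rfl
      (hLred k) (hLred (k + 1))
  choose a c b hA hB hC using D
  have hmul : ∀ k, u k * u (k + 1) = FreeGroup.mk (L k ++ L (k + 1)) := by
    intro k
    rw [← FreeGroup.mul_mk]
    simp [hLdef, FreeGroup.mk_toWord]
  have hnorm : ∀ k, (u k * u (k + 1)).norm = (a k).length + (b k).length := by
    intro k
    rw [FreeGroup.norm, hmul k, FreeGroup.toWord_mk, hC, List.length_append]
  have hnormk : ∀ k, (u k).norm = (L k).length := fun k => rfl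
  have hlen1 : ∀ k, (L k).length = (a k).length + (c k).length := by
    intro k
    have := congrArg List.length (hA k)
    simpa [FreeGroup.invRev_length] using this
  have hlen2 : ∀ k, (L (k + 1)).length = (c k).length + (b k).length := by
    intro k
    have := congrArg List.length (hB k)
    simpa using this
  have hac : ∀ k, k + 1 < n → (c k).length < (a k).length ∧ (c k).length < (b k).length := by
    intro k hk
    have h1 := hcon k hk
    rw [hnorm k, hnormk k, hnormk (k + 1)] at h1
    have h2 := max_lt_iff.mp h1
    have e1 := hlen1 k
    have e2 := hlen2 k
    omega
  -- the one-step lemma specialized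
  have step : ∀ m, m + 1 < n →
      (∃ t s, (((List.range (m + 1)).map u).prod).toWord = t ++ s ∧
        (∃ t', L m = t' ++ s) ∧ (c m).length < s.length) →
      ∃ t2, (((List.range (m + 2)).map u).prod).toWord = t2 ++ b m ∧ t2 ≠ [] := by
    intro m _ ⟨t, s, hPw, hLs, hcs⟩
    have hwred : FreeGroup.reduce ((((List.range (m + 1)).map u).prod).toWord)
        = (((List.range (m + 1)).map u).prod).toWord := FreeGroup.reduce_toWord _
    obtain ⟨t2, hred2, ht2⟩ :=
      PentusAux.step_lemma hwred (hA m) (hB m) (hC m) hPw hLs hcs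
    refine ⟨t2, ?_, ht2⟩
    have hPm1 : ((List.range (m + 2)).map u).prod
        = FreeGroup.mk ((((List.range (m + 1)).map u).prod).toWord ++ L (m + 1)) := by
      rw [List.range_succ, List.map_append, List.prod_append]
      rw [← FreeGroup.mul_mk, FreeGroup.mk_toWord]
      simp [hLdef, FreeGroup.mk_toWord]
    rw [hPm1, FreeGroup.toWord_mk, hred2]
  -- the invariant
  have key : ∀ m, m + 1 < n →
      ∃ t s, (((List.range (m + 1)).map u).prod).toWord = t ++ s ∧
        (∃ t', L m = t' ++ s) ∧ (c m).length < s.length := by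
    intro m
    induction m with
    | zero =>
      intro h0
      refine ⟨[], L 0, by simp [List.range_succ, hLdef], ⟨[], rfl⟩, ?_⟩
      have := (hac 0 h0).1
      have e1 := hlen1 0
      omega
    | succ m ih =>
      intro hm1
      have hm : m + 1 < n := by omega
      obtain ⟨t2, hPw2, ht2⟩ := step m hm (ih hm)
      refine ⟨t2, b m, hPw2, ⟨c m, hB m⟩, ?_⟩
      have h1 := (hac m hm).2
      have h2 := (hac (m + 1) hm1).1
      have e1 := hlen1 (m + 1)
      have e2 := hlen2 m
      omega
  -- final contradiction
  have hn2 : n - 2 + 1 < n := by omega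
  obtain ⟨t2, hPw2, ht2⟩ := step (n - 2) hn2 (key (n - 2) hn2)
  have hrange : n - 2 + 2 = n := by omega
  rw [hrange, h, FreeGroup.toWord_one] at hPw2
  exact ht2 (List.append_eq_nil_iff.mp hPw2.symm).1
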